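/- arXiv:2005.01835 — 2 statements merged into one kernel-verified Lean document; each statement's English description precedes it below -/
import Mathlib

section
/- For a square-integrable random variable Y and a forecast X (a random variable on the same probability space), the mean squared error decomposes as E[(X-Y)^2] = Var(Y) - Var(E[Y|X]) + E[(X - E[Y|X])^2]. (Murphy decomposition for squared error loss: uncertainty minus resolution plus miscalibration.) -/
/-!
Write `Z = E[Y|X]`. Since `X` is `σ(X)`-measurable, pulling it out of the conditional expectation
gives `E[XY] = E[XZ]`, and integrating it gives `E[Z] = E[Y]`. Expanding both squares and both
variances, the identity reduces to these two facts.
-/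

open MeasureTheory ProbabilityTheory

section

variable {Ω : Type*} {m m₀ : MeasurableSpace Ω} {μ : Measure Ω}

theorem integral_mul_condExp_of_stronglyMeasurable_left (hm : m ≤ m₀)
    [SigmaFinite (μ.trim hm)] {f g : Ω → ℝ} (hg : StronglyMeasurable[m] g)
    (hgf : Integrable (g * f) μ) (hf : Integrable f μ) :
    ∫ ω, g ω * (μ[f | m]) ω ∂μ = ∫ ω, g ω * f ω ∂μ :=
  calc ∫ ω, g ω * (μ[f | m]) ω ∂μ = ∫ ω, (μ[g * f | m]) ω ∂μ :=
        integral_congr_ae (condExp_mul_of_stronglyMeasurable_left hg hgf hf).symm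
    _ = ∫ ω, g ω * f ω ∂μ := integral_condExp hm

theorem integral_sub_sq_of_memLp {f g : Ω → ℝ} (hf : MemLp f 2 μ) (hg : MemLp g 2 μ) :
    ∫ ω, (f ω - g ω) ^ 2 ∂μ
      = ∫ ω, f ω ^ 2 ∂μ - 2 * ∫ ω, f ω * g ω ∂μ + ∫ ω, g ω ^ 2 ∂μ := by
  have hfg : Integrable (fun ω ↦ 2 * (f ω * g ω)) μ := (hf.integrable_mul hg).const_mul 2
  have hf_sub : Integrable (fun ω ↦ f ω ^ 2 - 2 * (f ω * g ω)) μ := hf.integrable_sq.sub hfg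
  simp_rw [sub_sq, mul_assoc]
  rw [integral_add hf_sub hg.integrable_sq, integral_sub hf.integrable_sq hfg, integral_const_mul]

theorem integral_sub_sq_eq_variance_sub_variance_condExp_add (hm : m ≤ m₀)
    [IsProbabilityMeasure μ] {X Y : Ω → ℝ} (hXm : StronglyMeasurable[m] X)
    (hX : MemLp X 2 μ) (hY : MemLp Y 2 μ) :
    ∫ ω, (X ω - Y ω) ^ 2 ∂μ
      = variance Y μ - variance (μ[Y | m]) μ + ∫ ω, (X ω - (μ[Y | m]) ω) ^ 2 ∂μ := by
  have hZ : MemLp (μ[Y | m]) 2 μ := hY.condExp one_le_two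
  rw [integral_sub_sq_of_memLp hX hY, integral_sub_sq_of_memLp hX hZ, variance_eq_sub hY,
    variance_eq_sub hZ, integral_condExp hm,
    integral_mul_condExp_of_stronglyMeasurable_left hm hXm (hX.integrable_mul hY)
      (hY.integrable one_le_two)]
  simp only [Pi.pow_apply]
  ring

end

/-- Murphy decomposition for squared error loss:
`E[(X-Y)^2] = Var(Y) - Var(E[Y|X]) + E[(X - E[Y|X])^2]`. -/
theorem murphy_decomposition_sq {Ω : Type*} [MeasurableSpace Ω] (P : Measure Ω)
    [IsProbabilityMeasure P] (X Y : Ω → ℝ) (hX : Measurable X)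
    (hX2 : MemLp X 2 P) (hY2 : MemLp Y 2 P) :
    ∫ ω, (X ω - Y ω) ^ 2 ∂P
      = variance Y P - variance (condExp (MeasurableSpace.comap X (borel ℝ)) P Y) P
        + ∫ ω, (X ω - condExp (MeasurableSpace.comap X (borel ℝ)) P Y ω) ^ 2 ∂P :=
  integral_sub_sq_eq_variance_sub_variance_condExp_add hX.comap_le
    (Measurable.of_comap_le le_rfl).stronglyMeasurable hX2 hY2
end

section
/- If a mean forecast X is autocalibrated, i.e. X = E[Y|X] almost surely, then the expected squared error satisfies E[(X-Y)^2] = Var(Y) - Var(X). In particular, among autocalibrated mean forecasts, minimizing mean squared error is equivalent to maximizing the variance of the forecast. -/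
open MeasureTheory ProbabilityTheory

/-! The mean squared error of `E[Y|m]` is the expected conditional variance `E[Var[Y|m]]`, so the
law of total variance `E[Var[Y|m]] + Var(E[Y|m]) = Var(Y)` gives the claim for `m = σ(X)`. -/

lemma ProbabilityTheory.integral_sq_sub_condExp_eq_variance_sub {Ω : Type*}
    {m m₀ : MeasurableSpace Ω} {μ : Measure[m₀] Ω} [IsProbabilityMeasure μ] {Y : Ω → ℝ}
    (hm : m ≤ m₀) (hY : MemLp Y 2 μ) :
    ∫ ω, (Y ω - μ[Y | m] ω) ^ 2 ∂μ = Var[Y; μ] - Var[μ[Y | m]; μ] := by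
  have hmse : μ[Var[Y; μ | m]] = ∫ ω, (Y ω - μ[Y | m] ω) ^ 2 ∂μ := integral_condExp hm
  rw [← hmse, ← integral_condVar_add_variance_condExp hm hY, add_sub_cancel_right]

theorem autocalibrated_mse_general {Ω : Type*} [MeasurableSpace Ω] (P : Measure Ω)
    [IsProbabilityMeasure P] (X Y : Ω → ℝ) (hX : Measurable X)
    (hY2 : MemLp Y 2 P)
    (hcal : X =ᵐ[P] condExp (MeasurableSpace.comap X (borel ℝ)) P Y) :
    ∫ ω, (X ω - Y ω) ^ 2 ∂P = variance Y P - variance X P := by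
  have hmse : ∫ ω, (X ω - Y ω) ^ 2 ∂P
      = ∫ ω, (Y ω - P[Y | MeasurableSpace.comap X (borel ℝ)] ω) ^ 2 ∂P := by
    refine integral_congr_ae ?_
    filter_upwards [hcal] with ω hω
    rw [hω, sub_sq_comm]
  rw [hmse, variance_congr hcal]
  exact integral_sq_sub_condExp_eq_variance_sub hX.comap_le hY2

/-- If a mean forecast `X` is autocalibrated, `X = E[Y|X]` a.s., then
`E[(X-Y)^2] = Var(Y) - Var(X)`. -/
theorem autocalibrated_mse {Ω : Type*} [MeasurableSpace Ω] (P : Measure Ω)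
    [IsProbabilityMeasure P] (X Y : Ω → ℝ) (hX : Measurable X)
    (hX2 : MemLp X 2 P) (hY2 : MemLp Y 2 P)
    (hcal : X =ᵐ[P] condExp (MeasurableSpace.comap X (borel ℝ)) P Y) :
    ∫ ω, (X ω - Y ω) ^ 2 ∂P = variance Y P - variance X P :=
  autocalibrated_mse_general P X Y hX hY2 hcal
end
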